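/- For every nonzero α ∈ ℂ, the Lie-Yamaguti algebra structure 𝓛₂₉ on ℂ⁴, given by [e₁,e₂]=e₃, [e₁,e₃]=e₄, [e₂,e₃]=e₄, [e₁,e₃,e₂]=e₄, [e₂,e₃,e₁]=e₄, degenerates to the structure 𝓛₂₃^α given by [e₁,e₂]=e₃, [e₁,e₃]=α e₄, [e₁,e₂,e₁]=e₄, [e₂,e₃,e₂]=e₄. -/

import Mathlib

open Filter Matrix Topology

/-- ℂ⁴ -/
abbrev V4 : Type := Fin 4 → ℂ

/-- GL₄(ℂ) -/
abbrev GL4 := Matrix.GeneralLinearGroup (Fin 4) ℂ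

/-- structure constants of a bilinear map on ℂ⁴: `μ i j` is the value on `(eᵢ, eⱼ)`. -/
abbrev Bil4 := Fin 4 → Fin 4 → V4

/-- structure constants of a trilinear map on ℂ⁴. -/
abbrev Tril4 := Fin 4 → Fin 4 → Fin 4 → V4

/-- standard basis vectors -/
noncomputable def e4 (k : Fin 4) : V4 := Pi.single k (1 : ℂ)

/-- action of `g ∈ GL₄(ℂ)` on a bilinear map: `(g·μ)(x,y) = g μ(g⁻¹x, g⁻¹y)`,
in structure constants. -/
noncomputable def actBil (g : GL4) (μ : Bil4) : Bil4 := fun i j =>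
  (g : Matrix (Fin 4) (Fin 4) ℂ).mulVec
    (∑ p, ∑ q,
      (((g⁻¹ : GL4) : Matrix (Fin 4) (Fin 4) ℂ) p i *
       ((g⁻¹ : GL4) : Matrix (Fin 4) (Fin 4) ℂ) q j) • μ p q)

/-- action of `g ∈ GL₄(ℂ)` on a trilinear map:
`(g·τ)(x,y,z) = g τ(g⁻¹x, g⁻¹y, g⁻¹z)`, in structure constants. -/
noncomputable def actTril (g : GL4) (τ : Tril4) : Tril4 := fun i j k =>
  (g : Matrix (Fin 4) (Fin 4) ℂ).mulVec
    (∑ p, ∑ q, ∑ r,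
      (((g⁻¹ : GL4) : Matrix (Fin 4) (Fin 4) ℂ) p i *
       ((g⁻¹ : GL4) : Matrix (Fin 4) (Fin 4) ℂ) q j *
       ((g⁻¹ : GL4) : Matrix (Fin 4) (Fin 4) ℂ) r k) • τ p q r)

/-- `(μ,τ)` degenerates to `(lam,sig)`: there is a curve `g : ℂ∖{0} → GL₄(ℂ)` with
`g(t)·μ → lam` and `g(t)·τ → sig` as `t → 0`. -/
def Degenerates (μ : Bil4) (τ : Tril4) (lam : Bil4) (sig : Tril4) : Prop :=
  ∃ g : ℂ → GL4,
    Tendsto (fun t => actBil (g t) μ) (𝓝[≠] (0 : ℂ)) (𝓝 lam) ∧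
    Tendsto (fun t => actTril (g t) τ) (𝓝[≠] (0 : ℂ)) (𝓝 sig)

noncomputable def μL29 : Bil4 := fun i j =>
  if i = (0 : Fin 4) ∧ j = (1 : Fin 4) then e4 2
  else if i = (1 : Fin 4) ∧ j = (0 : Fin 4) then -(e4 2)
  else if i = (0 : Fin 4) ∧ j = (2 : Fin 4) then e4 3
  else if i = (2 : Fin 4) ∧ j = (0 : Fin 4) then -(e4 3)
  else if i = (1 : Fin 4) ∧ j = (2 : Fin 4) then e4 3
  else if i = (2 : Fin 4) ∧ j = (1 : Fin 4) then -(e4 3)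
  else 0

noncomputable def τL29 : Tril4 := fun i j k =>
  if i = (0 : Fin 4) ∧ j = (2 : Fin 4) ∧ k = (1 : Fin 4) then e4 3
  else if i = (2 : Fin 4) ∧ j = (0 : Fin 4) ∧ k = (1 : Fin 4) then -(e4 3)
  else if i = (1 : Fin 4) ∧ j = (2 : Fin 4) ∧ k = (0 : Fin 4) then e4 3
  else if i = (2 : Fin 4) ∧ j = (1 : Fin 4) ∧ k = (0 : Fin 4) then -(e4 3)
  else 0

noncomputable def μL23 (α : ℂ) : Bil4 := fun i j =>
  if i = (0 : Fin 4) ∧ j = (1 : Fin 4) then e4 2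
  else if i = (1 : Fin 4) ∧ j = (0 : Fin 4) then -(e4 2)
  else if i = (0 : Fin 4) ∧ j = (2 : Fin 4) then α • e4 3
  else if i = (2 : Fin 4) ∧ j = (0 : Fin 4) then -(α • e4 3)
  else 0

noncomputable def τL23 : Tril4 := fun i j k =>
  if i = (0 : Fin 4) ∧ j = (1 : Fin 4) ∧ k = (0 : Fin 4) then e4 3
  else if i = (1 : Fin 4) ∧ j = (0 : Fin 4) ∧ k = (0 : Fin 4) then -(e4 3)
  else if i = (1 : Fin 4) ∧ j = (2 : Fin 4) ∧ k = (1 : Fin 4) then e4 3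
  else if i = (2 : Fin 4) ∧ j = (1 : Fin 4) ∧ k = (1 : Fin 4) then -(e4 3)
  else 0

/-!
In the basis `p₁ = (-2α, 0, 2, 0)`, `p₂ = (1, -1, -2/α, 0)`, `p₃ = (0, 0, 2α, 4)`, `p₄ = (0, 0, 0, -4α)`
the only nonzero products of `𝓛₂₉` are
`[p₁,p₂] = p₃`, `[p₁,p₃] = α p₄`, `[p₁,p₂,p₁] = [p₂,p₃,p₂] = p₄`, `[p₁,p₃,p₂] = [p₂,p₃,p₁] = -α p₄`.
For the weights `2, 1, 3, 5` of `p₁, p₂, p₃, p₄` all of them are homogeneous of weight `0`, except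
the last two, of weight `1`. So in the basis `fᵢ = s ^ wᵢ • pᵢ` the products are those of `𝓛₂₃^α`
plus `s` times the last two, and these vanish as `s → 0`.
-/

def bilApply (μ : Bil4) (x y : V4) : V4 := ∑ p, ∑ q, (x p * y q) • μ p q

def trilApply (τ : Tril4) (x y z : V4) : V4 := ∑ p, ∑ q, ∑ r, (x p * y q * z r) • τ p q r

theorem actBil_inv_eq_of_bilApply (g : GL4) {μ μ' : Bil4}
    (h : ∀ i j, bilApply μ ((g : Matrix (Fin 4) (Fin 4) ℂ)ᵀ i) ((g : Matrix (Fin 4) (Fin 4) ℂ)ᵀ j)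
      = (g : Matrix (Fin 4) (Fin 4) ℂ) *ᵥ μ' i j) :
    actBil g⁻¹ μ = μ' := by
  funext i j
  change (g⁻¹ : GL4).val *ᵥ bilApply μ ((g⁻¹⁻¹ : GL4).valᵀ i) ((g⁻¹⁻¹ : GL4).valᵀ j) = _
  rw [inv_inv, h, mulVec_mulVec, ← Units.val_mul, inv_mul_cancel, Units.val_one, one_mulVec]

theorem actTril_inv_eq_of_trilApply (g : GL4) {τ τ' : Tril4}
    (h : ∀ i j k, trilApply τ ((g : Matrix (Fin 4) (Fin 4) ℂ)ᵀ i) ((g : Matrix (Fin 4) (Fin 4) ℂ)ᵀ j)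
      ((g : Matrix (Fin 4) (Fin 4) ℂ)ᵀ k) = (g : Matrix (Fin 4) (Fin 4) ℂ) *ᵥ τ' i j k) :
    actTril g⁻¹ τ = τ' := by
  funext i j k
  change (g⁻¹ : GL4).val *ᵥ trilApply τ ((g⁻¹⁻¹ : GL4).valᵀ i) ((g⁻¹⁻¹ : GL4).valᵀ j)
    ((g⁻¹⁻¹ : GL4).valᵀ k) = _
  rw [inv_inv, h, mulVec_mulVec, ← Units.val_mul, inv_mul_cancel, Units.val_one, one_mulVec]

theorem degenerates_of_act_eq_add_smul {μ : Bil4} {τ : Tril4} {lam : Bil4} {sig ρ : Tril4}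
    (h : ∀ t : ℂ, t ≠ 0 → ∃ g : GL4, actBil g μ = lam ∧ actTril g τ = sig + t • ρ) :
    Degenerates μ τ lam sig := by
  choose! g hg using h
  have hρ : Tendsto (fun t : ℂ => sig + t • ρ) (𝓝[≠] 0) (𝓝 sig) := by
    have : Tendsto (fun t : ℂ => sig + t • ρ) (𝓝 0) (𝓝 (sig + (0 : ℂ) • ρ)) :=
      (continuous_const.add (continuous_id.smul continuous_const)).tendsto 0
    simpa using this.mono_left nhdsWithin_le_nhds
  refine ⟨g, tendsto_const_nhds.congr' ?_, hρ.congr' ?_⟩ <;>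
    filter_upwards [self_mem_nhdsWithin] with t ht
  · exact (hg t ht).1.symm
  · exact (hg t ht).2.symm

theorem bilApply_μL29 (x y : V4) :
    bilApply μL29 x y = (x 0 * y 1 - x 1 * y 0) • e4 2
      + (x 0 * y 2 - x 2 * y 0 + (x 1 * y 2 - x 2 * y 1)) • e4 3 := by
  simp [bilApply, μL29, Fin.sum_univ_four]
  module

theorem trilApply_τL29 (x y z : V4) :
    trilApply τL29 x y z = ((x 0 * y 2 - x 2 * y 0) * z 1 + (x 1 * y 2 - x 2 * y 1) * z 0) • e4 3 := by
  simp [trilApply, τL29, Fin.sum_univ_four]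
  module

-- The columns are the vectors `fᵢ` above for `s = α t`, which keeps the entries polynomial.
noncomputable def frameL23 (α t : ℂ) : Matrix (Fin 4) (Fin 4) ℂ :=
  !![-2 * α ^ 3 * t ^ 2, α * t, 0, 0;
     0, -(α * t), 0, 0;
     2 * α ^ 2 * t ^ 2, -2 * t, 2 * α ^ 4 * t ^ 3, 0;
     0, 0, 4 * α ^ 3 * t ^ 3, -4 * α ^ 6 * t ^ 5]

theorem det_frameL23 (α t : ℂ) : (frameL23 α t).det = -16 * α ^ 14 * t ^ 11 := by
  rw [det_succ_column_zero]
  simp [frameL23, Fin.sum_univ_succ, det_fin_three]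
  ring

theorem bilApply_μL29_frameL23 (α t : ℂ) (i j : Fin 4) :
    bilApply μL29 ((frameL23 α t)ᵀ i) ((frameL23 α t)ᵀ j) = frameL23 α t *ᵥ μL23 α i j := by
  rw [bilApply_μL29]
  fin_cases i <;> fin_cases j <;> ext m <;> fin_cases m <;>
    simp [frameL23, μL23, e4, Pi.single_apply, mulVec, dotProduct] <;> ring

set_option maxHeartbeats 1000000 in
theorem trilApply_τL29_frameL23 (α t : ℂ) (i j k : Fin 4) :
    trilApply τL29 ((frameL23 α t)ᵀ i) ((frameL23 α t)ᵀ j) ((frameL23 α t)ᵀ k)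
      = frameL23 α t *ᵥ (τL23 + t • -α ^ 2 • τL29) i j k := by
  rw [trilApply_τL29]
  fin_cases i <;> fin_cases j <;> fin_cases k <;> ext m <;> fin_cases m <;>
    simp [frameL23, τL23, τL29, e4, Pi.single_apply, mulVec, dotProduct, -mul_eq_zero] <;> ring

/-- for every nonzero α, 𝓛₂₉ degenerates to 𝓛₂₃^α. -/
theorem stmt6 : ∀ α : ℂ, α ≠ 0 → Degenerates μL29 τL29 (μL23 α) τL23 := by
  intro α hα
  refine degenerates_of_act_eq_add_smul (ρ := -α ^ 2 • τL29) fun t ht => ?_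
  have hdet : (frameL23 α t).det ≠ 0 := by
    rw [det_frameL23]
    exact mul_ne_zero (mul_ne_zero (by norm_num) (pow_ne_zero _ hα)) (pow_ne_zero _ ht)
  exact ⟨(GeneralLinearGroup.mkOfDetNeZero _ hdet)⁻¹,
    actBil_inv_eq_of_bilApply _ (bilApply_μL29_frameL23 α t),
    actTril_inv_eq_of_trilApply _ (trilApply_τL29_frameL23 α t)⟩
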